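/- Let {V_n} satisfy the Fibonacci recurrence, d be even, and x satisfy F_{kd}/F_d ≤ x < F_{(k+1)d}/F_d with greedy coefficients λ_1, …, λ_k with respect to 1, F_{2d}/F_d, …, F_{kd}/F_d. Then s(x) := ∑_{i=1}^k λ_i V_{n+id} satisfies V_{n+kd} ≤ s(x) < V_{n+(k+1)d} and s(x) ≡ V_{n+d}·x (mod V_n). -/

import Mathlib

theorem rec_add (W : ℕ → ℕ) (hW : ∀ m, W (m + 2) = W (m + 1) + W m) :
    ∀ c a, W (a + c + 1) = Nat.fib c * W a + Nat.fib (c + 1) * W (a + 1) := by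
  intro c
  induction c using Nat.strong_induction_on with
  | _ c ih =>
    match c with
    | 0 => intro a; simp
    | 1 => intro a; show W (a + 2) = _ ; rw [hW a]; simp [Nat.fib_one, Nat.fib_two]; omega
    | c + 2 =>
      intro a
      have h1 := ih (c + 1) (by omega) a
      have h2 := ih c (by omega) a
      have h3 := hW (a + c + 1)
      have f2 : Nat.fib (c + 2) = Nat.fib c + Nat.fib (c + 1) := Nat.fib_add_two
      have f2' : Nat.fib (c + 1 + 1) = Nat.fib c + Nat.fib (c + 1) := f2
      have f3 : Nat.fib (c + 3) = Nat.fib (c + 1) + Nat.fib (c + 2) := Nat.fib_add_two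
      have e1 : a + (c + 2) + 1 = a + c + 1 + 2 := by ring
      have e2 : a + (c + 1) + 1 = a + c + 1 + 1 := by ring
      rw [e2] at h1
      rw [f2'] at h1
      rw [e1, h3, h1, h2, f3, f2]
      ring

theorem cassini : ∀ e : ℕ, Nat.fib (2*e+1) * Nat.fib (2*e+3) = Nat.fib (2*e+2) ^ 2 + 1
    ∧ Nat.fib (2*e+2) * Nat.fib (2*e+4) + 1 = Nat.fib (2*e+3) ^ 2 := by
  intro e
  induction e with
  | zero => decide
  | succ e ih =>
    obtain ⟨h1, h2⟩ := ih
    have e4 : Nat.fib (2*e+4) = Nat.fib (2*e+3) + Nat.fib (2*e+2) := by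
      rw [show 2*e+4 = (2*e+2)+2 from by ring, Nat.fib_add_two]
      rw [show 2*e+2+1 = 2*e+3 from by ring]; ring
    have e5 : Nat.fib (2*e+5) = 2 * Nat.fib (2*e+3) + Nat.fib (2*e+2) := by
      rw [show 2*e+5 = (2*e+3)+2 from by ring, Nat.fib_add_two]
      rw [show 2*e+3+1 = 2*e+4 from by ring, e4]; ring
    have e6 : Nat.fib (2*e+6) = 3 * Nat.fib (2*e+3) + 2 * Nat.fib (2*e+2) := by
      rw [show 2*e+6 = (2*e+4)+2 from by ring, Nat.fib_add_two]
      rw [show 2*e+4+1 = 2*e+5 from by ring, e4, e5]; ring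
    rw [e4] at h2
    constructor
    · rw [show 2*(e+1)+1 = 2*e+3 from by ring, show 2*(e+1)+3 = 2*e+5 from by ring,
        show 2*(e+1)+2 = 2*e+4 from by ring, e5, e4]
      nlinarith [h2]
    · rw [show 2*(e+1)+2 = 2*e+4 from by ring, show 2*(e+1)+4 = 2*e+6 from by ring,
        show 2*(e+1)+3 = 2*e+5 from by ring, e6, e5, e4]
      nlinarith [h2]

theorem step (g : ℕ) (W : ℕ → ℕ) (hW : ∀ m, W (m + 2) = W (m + 1) + W m) (a : ℕ) :
    W (a + (4*g+4)) + W a = (Nat.fib (2*g+3) + Nat.fib (2*g+1)) * W (a + (2*g+2)) := by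
  have h1 := rec_add W hW (4*g+3) a
  have h2 := rec_add W hW (2*g+1) a
  rw [show a + (4*g+3) + 1 = a + (4*g+4) from by ring, show 4*g+3+1 = 4*g+4 from by ring] at h1
  rw [show a + (2*g+1) + 1 = a + (2*g+2) from by ring, show 2*g+1+1 = 2*g+2 from by ring] at h2
  have f1 : Nat.fib (4*g+3) = Nat.fib (2*g+2)^2 + Nat.fib (2*g+1)^2 := by
    have h := Nat.fib_two_mul_add_one (2*g+1)
    rw [show 2*(2*g+1)+1 = 4*g+3 from by ring, show 2*g+1+1 = 2*g+2 from by ring] at h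
    exact h
  have f2 : Nat.fib (4*g+4) = Nat.fib (2*g+1) * Nat.fib (2*g+2) + Nat.fib (2*g+2) * Nat.fib (2*g+3) := by
    have h := Nat.fib_add (2*g+1) (2*g+2)
    rw [show 2*g+1 + (2*g+2) + 1 = 4*g+4 from by ring, show 2*g+1+1 = 2*g+2 from by ring,
      show 2*g+2+1 = 2*g+3 from by ring] at h
    exact h
  have hc := (cassini g).1
  rw [h1, h2, f1, f2]
  nlinarith [hc]

theorem greedy_upper (w v : ℕ → ℕ) (L : ℕ) (hL : 3 ≤ L)
    (hw0 : w 0 = 0) (hw1 : w 1 = 1)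
    (hwrec : ∀ m, w (m + 2) + w m = L * w (m + 1))
    (hwpos : ∀ m, 0 < w (m + 1))
    (hv0 : v 0 < v 1)
    (hvrec : ∀ m, v (m + 2) + v m = L * v (m + 1))
    (lam r : ℕ → ℕ)
    (hlam : ∀ m, lam (m + 1) = r (m + 1) / w (m + 1))
    (hr : ∀ m, r m = r (m + 1) % w (m + 1)) :
    ∀ m, 1 ≤ m →
      (r m < w (m + 1) → ∑ i ∈ Finset.Icc 1 m, lam i * v i < v (m + 1)) ∧
      (r m + w m < w (m + 1) → (∑ i ∈ Finset.Icc 1 m, lam i * v i) + v m < v (m + 1)) := by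
  have hv : ∀ m, v m < v (m + 1) := by
    intro m
    induction m with
    | zero => exact hv0
    | succ j ih =>
      show v (j + 1) < v (j + 2)
      have h1 := hvrec j
      have h2 : 3 * v (j + 1) ≤ L * v (j + 1) := Nat.mul_le_mul_right _ hL
      omega
  have hw2 : w 2 = L := by have h := hwrec 0; norm_num [hw0, hw1] at h; exact h
  intro m hm
  induction m, hm using Nat.le_induction with
  | base =>
    have hlam1 : lam 1 = r 1 := by rw [hlam 0, hw1, Nat.div_one]
    rw [Finset.Icc_self, Finset.sum_singleton, hlam1, hw1, hw2]
    have hid : ∀ c : ℕ, c ≤ L → c * v 1 ≤ L * v 1 := fun c hc => Nat.mul_le_mul_right _ hc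
    constructor
    · intro h
      show r 1 * v 1 < v 2
      have h1 : (r 1 + 1) * v 1 ≤ L * v 1 := hid _ (by omega)
      have h2 : (r 1 + 1) * v 1 = r 1 * v 1 + v 1 := by ring
      have h3 : v 2 + v 0 = L * v 1 := hvrec 0
      omega
    · intro h
      show r 1 * v 1 + v 1 < v 2
      have h1 : (r 1 + 2) * v 1 ≤ L * v 1 := hid _ (by omega)
      have h2 : (r 1 + 2) * v 1 = r 1 * v 1 + 2 * v 1 := by ring
      have h3 : v 2 + v 0 = L * v 1 := hvrec 0
      omega
  | succ m hm ih =>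
    obtain ⟨IH1, IH2⟩ := ih
    have hwm : 0 < w m := by
      cases m with
      | zero => omega
      | succ j => exact hwpos j
    have hdm : w (m + 1) * lam (m + 1) + r m = r (m + 1) := by
      rw [hlam m, hr m]; exact Nat.div_add_mod _ _
    have hrlt : r m < w (m + 1) := by rw [hr m]; exact Nat.mod_lt _ (hwpos m)
    have hsum : ∑ i ∈ Finset.Icc 1 (m + 1), lam i * v i
        = (∑ i ∈ Finset.Icc 1 m, lam i * v i) + lam (m + 1) * v (m + 1) :=
      Finset.sum_Icc_succ_top (by omega) _
    rw [hsum]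
    set A := ∑ i ∈ Finset.Icc 1 m, lam i * v i with hA
    set B := lam (m + 1) with hB
    have hwr := hwrec m
    have hvr := hvrec m
    have hvm := hv m
    have hvm1 := hv (m + 1)
    -- generic multiplication facts
    have hBle : ∀ c : ℕ, B ≤ c → B * v (m + 1) ≤ c * v (m + 1) :=
      fun c hc => Nat.mul_le_mul_right _ hc
    have hLv : ∀ c : ℕ, c ≤ L → c * v (m + 1) ≤ L * v (m + 1) :=
      fun c hc => Nat.mul_le_mul_right _ hc
    have hLsplit : (L - 1) * v (m + 1) + v (m + 1) = L * v (m + 1) := by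
      have h9 : L - 1 + 1 = L := by omega
      calc (L - 1) * v (m + 1) + v (m + 1) = (L - 1 + 1) * v (m + 1) := by ring
        _ = L * v (m + 1) := by rw [h9]
    have hLsplit2 : (L - 2) * v (m + 1) + 2 * v (m + 1) = L * v (m + 1) := by
      have h9 : L - 2 + 2 = L := by omega
      calc (L - 2) * v (m + 1) + 2 * v (m + 1) = (L - 2 + 2) * v (m + 1) := by ring
        _ = L * v (m + 1) := by rw [h9]
    have hLsplit3 : (L - 3) * v (m + 1) + 3 * v (m + 1) = L * v (m + 1) := by
      have h9 : L - 3 + 3 = L := by omega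
      calc (L - 3) * v (m + 1) + 3 * v (m + 1) = (L - 3 + 3) * v (m + 1) := by ring
        _ = L * v (m + 1) := by rw [h9]
    have hwsplit1 : w (m + 1) * (L - 1) + w (m + 1) = L * w (m + 1) := by
      have h9 : L - 1 + 1 = L := by omega
      calc w (m + 1) * (L - 1) + w (m + 1) = (L - 1 + 1) * w (m + 1) := by ring
        _ = L * w (m + 1) := by rw [h9]
    have hwsplit2 : w (m + 1) * (L - 2) + 2 * w (m + 1) = L * w (m + 1) := by
      have h9 : L - 2 + 2 = L := by omega
      calc w (m + 1) * (L - 2) + 2 * w (m + 1) = (L - 2 + 2) * w (m + 1) := by ring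
        _ = L * w (m + 1) := by rw [h9]
    have e1 : v (m + 1 + 1) = v (m + 2) := rfl
    have e2 : w (m + 1 + 1) = w (m + 2) := rfl
    constructor
    · -- part (i)
      intro h
      have hBlt : B < L := by
        by_contra hc
        push_neg at hc
        have h1 : w (m + 1) * L ≤ w (m + 1) * B := Nat.mul_le_mul_left _ hc
        have h2 : w (m + 1) * L = L * w (m + 1) := by ring
        omega
      rcases Nat.lt_or_ge B (L - 1) with hcase | hcase
      · -- B ≤ L - 2
        have h1 := IH1 hrlt
        have h2 : B * v (m + 1) ≤ (L - 2) * v (m + 1) := hBle _ (by omega)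
        omega
      · -- B = L - 1
        have hBeq : B = L - 1 := by omega
        have hdm' : w (m + 1) * (L - 1) + r m = r (m + 1) := by rw [← hBeq]; exact hdm
        have hrm2 : r m + w m < w (m + 1) := by omega
        have h1 := IH2 hrm2
        rw [hBeq]
        omega
    · -- part (ii)
      intro h
      have hBlt : B + 1 < L := by
        by_contra hc
        push_neg at hc
        have h1 : w (m + 1) * L ≤ w (m + 1) * (B + 1) := Nat.mul_le_mul_left _ hc
        have h2 : w (m + 1) * (B + 1) = w (m + 1) * B + w (m + 1) := by ring
        have h3 : w (m + 1) * L = L * w (m + 1) := by ring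
        omega
      rcases Nat.lt_or_ge B (L - 2) with hcase | hcase
      · -- B ≤ L - 3
        have h1 := IH1 hrlt
        have h2 : B * v (m + 1) ≤ (L - 3) * v (m + 1) := hBle _ (by omega)
        omega
      · -- B = L - 2
        have hBeq : B = L - 2 := by omega
        have hdm' : w (m + 1) * (L - 2) + r m = r (m + 1) := by rw [← hBeq]; exact hdm
        have hrm2 : r m + w m < w (m + 1) := by omega
        have h1 := IH2 hrm2
        rw [hBeq]
        omega

def lucas : ℕ → ℕ
  | 0 => 2
  | 1 => 1
  | n + 2 => lucas (n + 1) + lucas n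

/-- the `i`-th greedy weight `F_{id}/F_d`. -/
def gw (d i : ℕ) : ℕ := Nat.fib (i * d) / Nat.fib d

/-- `gRem d k x m` is the remaining value after the greedy algorithm for `x`,
with respect to the weights `gw d 1, …, gw d k`, has processed the top `m`
indices `k, k-1, …, k-m+1`. -/
def gRem (d k x : ℕ) : ℕ → ℕ
  | 0 => x
  | m + 1 => gRem d k x m % gw d (k - m)

/-- the `i`-th greedy coefficient `λ_i` of `x` w.r.t. `gw d 1, …, gw d k`:
`λ_i = ⌊(x − ∑_{j>i} λ_j · gw d j) / gw d i⌋`. -/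
def gLam (d k x i : ℕ) : ℕ := gRem d k x (k - i) / gw d i

theorem greedy_s_bounds_and_congruence
    (V : ℕ → ℕ) (hV : ∀ m, V (m + 2) = V (m + 1) + V m)
    (hVpos : ∀ m, 1 ≤ m → 0 < V m)
    (d n k x : ℕ) (hd : 0 < d) (hde : Even d) (hn : 1 ≤ n) (hk : 1 ≤ k)
    (hx : 0 < x)
    (hx1 : Nat.fib (k * d) / Nat.fib d ≤ x)
    (hx2 : x < Nat.fib ((k + 1) * d) / Nat.fib d) :
    V (n + k * d) ≤ ∑ i ∈ Finset.Icc 1 k, gLam d k x i * V (n + i * d) ∧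
    (∑ i ∈ Finset.Icc 1 k, gLam d k x i * V (n + i * d)) < V (n + (k + 1) * d) ∧
    (∑ i ∈ Finset.Icc 1 k, gLam d k x i * V (n + i * d)) ≡ V (n + d) * x [MOD V n] := by
  -- d = 2g + 2
  obtain ⟨t, ht⟩ := hde
  obtain ⟨g, hg⟩ : ∃ g, d = 2 * g + 2 := ⟨t - 1, by omega⟩
  set L : ℕ := Nat.fib (2 * g + 3) + Nat.fib (2 * g + 1) with hLdef
  have fibd_pos : 0 < Nat.fib d := Nat.fib_pos.mpr hd
  have hL : 3 ≤ L := by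
    have h1 : Nat.fib 3 ≤ Nat.fib (2 * g + 3) := Nat.fib_mono (by omega)
    have h2 : Nat.fib 1 ≤ Nat.fib (2 * g + 1) := Nat.fib_mono (by omega)
    have e1 : Nat.fib 3 = 2 := by decide
    have e2 : Nat.fib 1 = 1 := by decide
    omega
  have hfibrec : ∀ m, Nat.fib (m + 2) = Nat.fib (m + 1) + Nat.fib m := by
    intro m; rw [Nat.fib_add_two]; ring
  have hfibstep : ∀ a, Nat.fib (a + 2 * d) + Nat.fib a = L * Nat.fib (a + d) := by
    intro a
    have h := step g Nat.fib hfibrec a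
    rw [show a + (4 * g + 4) = a + 2 * d from by omega,
      show a + (2 * g + 2) = a + d from by omega] at h
    exact h
  have hVstep : ∀ a, V (a + 2 * d) + V a = L * V (a + d) := by
    intro a
    have h := step g V hV a
    rw [show a + (4 * g + 4) = a + 2 * d from by omega,
      show a + (2 * g + 2) = a + d from by omega] at h
    exact h
  have hdvd : ∀ i, Nat.fib d ∣ Nat.fib (i * d) := fun i => Nat.fib_dvd _ _ (dvd_mul_left d i)
  have hgwmul : ∀ i, gw d i * Nat.fib d = Nat.fib (i * d) := fun i => Nat.div_mul_cancel (hdvd i)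
  have hw0 : gw d 0 = 0 := by simp [gw]
  have hw1 : gw d 1 = 1 := by simp [gw, Nat.div_self fibd_pos]
  have hwrec : ∀ m, gw d (m + 2) + gw d m = L * gw d (m + 1) := by
    intro m
    apply Nat.eq_of_mul_eq_mul_right fibd_pos
    have h := hfibstep (m * d)
    rw [show m * d + 2 * d = (m + 2) * d from by ring, show m * d + d = (m + 1) * d from by ring] at h
    calc (gw d (m + 2) + gw d m) * Nat.fib d
        = gw d (m + 2) * Nat.fib d + gw d m * Nat.fib d := by ring
      _ = Nat.fib ((m + 2) * d) + Nat.fib (m * d) := by rw [hgwmul, hgwmul]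
      _ = L * Nat.fib ((m + 1) * d) := h
      _ = L * (gw d (m + 1) * Nat.fib d) := by rw [hgwmul]
      _ = L * gw d (m + 1) * Nat.fib d := by ring
  have hwpos : ∀ m, 0 < gw d (m + 1) := by
    intro m
    exact Nat.div_pos (Nat.fib_mono (by nlinarith)) fibd_pos
  -- monotonicity of gw
  have hwmono : ∀ m, gw d (m + 1) ≤ gw d (m + 2) := by
    intro m
    induction m with
    | zero =>
      have h := hwrec 0
      have h3 : 3 * gw d 1 ≤ L * gw d 1 := Nat.mul_le_mul_right _ hL
      rw [hw1] at *
      omega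
    | succ j ih =>
      show gw d (j + 2) ≤ gw d (j + 3)
      have h : gw d (j + 3) + gw d (j + 1) = L * gw d (j + 2) := hwrec (j + 1)
      have h3 : 3 * gw d (j + 2) ≤ L * gw d (j + 2) := Nat.mul_le_mul_right _ hL
      omega
  have hwmono' : ∀ a b, a ≤ b → gw d (a + 1) ≤ gw d (b + 1) := by
    intro a b hab
    induction b with
    | zero => have : a = 0 := by omega
              simp [this]
    | succ j ih =>
      rcases Nat.lt_or_ge a (j + 1) with hc | hc
      · exact le_trans (ih (by omega)) (hwmono j)
      · have : a = j + 1 := by omega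
        simp [this]
  -- V increasing along +2 steps
  have hlt2 : ∀ y, V y < V (y + 2) := by
    intro y
    have h1 := hV y
    have h2 := hVpos (y + 1) (by omega)
    omega
  have hchain : ∀ j y, V y < V (y + 2 * j + 2) := by
    intro j
    induction j with
    | zero => intro y; have := hlt2 y; rw [show y + 2 * 0 + 2 = y + 2 from by ring]; exact this
    | succ j ih =>
      intro y
      have h1 := ih y
      have h2 := hlt2 (y + 2 * j + 2)
      rw [show y + 2 * j + 2 + 2 = y + 2 * (j + 1) + 2 from by ring] at h2
      omega
  have hv0 : V (n + 0 * d) < V (n + 1 * d) := by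
    have h := hchain g n
    rw [show n + 2 * g + 2 = n + 1 * d from by omega] at h
    simpa using h
  have hvrec : ∀ m, V (n + (m + 2) * d) + V (n + m * d) = L * V (n + (m + 1) * d) := by
    intro m
    have h := hVstep (n + m * d)
    rw [show n + m * d + 2 * d = n + (m + 2) * d from by ring,
      show n + m * d + d = n + (m + 1) * d from by ring] at h
    exact h
  -- the remainder sequence
  set r : ℕ → ℕ := fun m => gRem d k x (k - m) with hrdef
  have hx2' : x < gw d (k + 1) := hx2
  have hr : ∀ m, r m = r (m + 1) % gw d (m + 1) := by
    intro m
    rcases Nat.lt_or_ge m k with hc | hc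
    · show gRem d k x (k - m) = gRem d k x (k - (m + 1)) % gw d (m + 1)
      rw [show k - m = (k - (m + 1)) + 1 from by omega]
      show gRem d k x (k - (m + 1)) % gw d (k - (k - (m + 1))) = _
      rw [show k - (k - (m + 1)) = m + 1 from by omega]
    · show gRem d k x (k - m) = gRem d k x (k - (m + 1)) % gw d (m + 1)
      rw [show k - m = 0 from by omega, show k - (m + 1) = 0 from by omega]
      show x = x % gw d (m + 1)
      have hlt : x < gw d (m + 1) := by
        calc x < gw d (k + 1) := hx2'
          _ ≤ gw d (m + 1) := hwmono' k m hc
      exact (Nat.mod_eq_of_lt hlt).symm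
  have hlam : ∀ m, gLam d k x (m + 1) = r (m + 1) / gw d (m + 1) := fun m => rfl
  have hrk : r k = x := by
    show gRem d k x (k - k) = x
    rw [Nat.sub_self]
    rfl
  -- upper bound
  have hupper := (greedy_upper (gw d) (fun i => V (n + i * d)) L hL hw0 hw1 hwrec hwpos
    hv0 hvrec (gLam d k x) r hlam hr k hk).1 (by rw [hrk]; exact hx2')
  -- lower bound
  have hlampos : 1 ≤ gLam d k x k := by
    have : gw d k ≤ x := hx1
    have hkpos : 0 < gw d k := by
      have := hwpos (k - 1)
      rwa [show k - 1 + 1 = k from by omega] at this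
    show 1 ≤ gRem d k x (k - k) / gw d k
    rw [Nat.sub_self]
    show 1 ≤ x / gw d k
    exact Nat.one_le_div_iff hkpos |>.mpr this
  have hlower : V (n + k * d) ≤ ∑ i ∈ Finset.Icc 1 k, gLam d k x i * V (n + i * d) := by
    calc V (n + k * d) ≤ gLam d k x k * V (n + k * d) :=
          Nat.le_mul_of_pos_left _ hlampos
      _ ≤ ∑ i ∈ Finset.Icc 1 k, gLam d k x i * V (n + i * d) :=
          Finset.single_le_sum (f := fun i => gLam d k x i * V (n + i * d))
            (fun i _ => Nat.zero_le _) (Finset.mem_Icc.mpr ⟨hk, le_refl k⟩)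
  -- decomposition of x
  have hr0 : r 0 = 0 := by
    show gRem d k x (k - 0) = 0
    rw [show k - 0 = (k - 1) + 1 from by omega]
    show gRem d k x (k - 1) % gw d (k - (k - 1)) = 0
    rw [show k - (k - 1) = 1 from by omega, hw1, Nat.mod_one]
  have hdecomp' : ∀ m, r m = ∑ i ∈ Finset.Icc 1 m, gLam d k x i * gw d i := by
    intro m
    induction m with
    | zero => simpa using hr0
    | succ j ih =>
      rw [Finset.sum_Icc_succ_top (by omega), ← ih]
      have h := Nat.div_add_mod (r (j + 1)) (gw d (j + 1))
      rw [← hlam j, ← hr j] at h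
      have hc : gw d (j + 1) * gLam d k x (j + 1) = gLam d k x (j + 1) * gw d (j + 1) :=
        mul_comm _ _
      omega
  have hdecomp : x = ∑ i ∈ Finset.Icc 1 k, gLam d k x i * gw d i := by
    conv_lhs => rw [← hrk]
    exact hdecomp' k
  -- congruence
  have hcong : (∑ i ∈ Finset.Icc 1 k, gLam d k x i * V (n + i * d)) ≡ V (n + d) * x [MOD V n] := by
    rw [← ZMod.natCast_eq_natCast_iff]
    have key : ∀ i, 1 ≤ i →
        ((V (n + i * d) : ℕ) : ZMod (V n)) = ((V (n + d) : ℕ) : ZMod (V n)) * (gw d i : ℕ) := by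
      intro i hi
      have hi1 : 1 ≤ i * d := by nlinarith
      have h1 := rec_add V hV (i * d - 1) n
      rw [show n + (i * d - 1) + 1 = n + i * d from by omega,
        show i * d - 1 + 1 = i * d from by omega] at h1
      have h2 := rec_add V hV (d - 1) n
      rw [show n + (d - 1) + 1 = n + d from by omega,
        show d - 1 + 1 = d from by omega] at h2
      have hgm := hgwmul i
      rw [h1, h2]
      push_cast
      rw [ZMod.natCast_self]
      ring_nf
      rw [show ((Nat.fib (i * d) : ZMod (V n))) = ((gw d i * Nat.fib d : ℕ) : ZMod (V n)) from by
        rw [hgm]]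
      push_cast
      ring
    push_cast
    calc ∑ i ∈ Finset.Icc 1 k, (gLam d k x i : ZMod (V n)) * ((V (n + i * d) : ℕ) : ZMod (V n))
        = ∑ i ∈ Finset.Icc 1 k, (gLam d k x i : ZMod (V n)) *
            (((V (n + d) : ℕ) : ZMod (V n)) * (gw d i : ℕ)) := by
          refine Finset.sum_congr rfl (fun i hi => ?_)
          rw [key i (Finset.mem_Icc.mp hi).1]
      _ = ((V (n + d) : ℕ) : ZMod (V n)) *
            ∑ i ∈ Finset.Icc 1 k, (gLam d k x i : ZMod (V n)) * (gw d i : ℕ) := by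
          rw [Finset.mul_sum]
          exact Finset.sum_congr rfl (fun i _ => by ring)
      _ = ((V (n + d) : ℕ) : ZMod (V n)) * (x : ℕ) := by
          congr 1
          conv_rhs => rw [hdecomp]
          push_cast
          rfl
  exact ⟨hlower, hupper, hcong⟩
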